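/- Let g be the flat Bargmann metric on ℝ^{d+2} (g = Σᵢ₌₁^d (dxⁱ)² + 2 dt ⊙ ds with t = x^{d+1}, s = x^{d+2}) and ξ = ∂/∂s. For Λ ∈ so(d+1,1) (g-skew endomorphism), Γ ∈ ℝ^{d+2}, and α, χ ∈ ℝ with Λξ + χξ = 0, the vector field Z(x) = Λx + Γ − (1/2)α g(x,x)ξ + α g(ξ,x)x + χx satisfies the conformal Killing equation L_Z g = φ_Z · g for the function φ_Z(x) = 2(α g(ξ,x) + χ), and satisfies L_Z ξ = 0 (i.e., [Z, ∂/∂s] = 0). -/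

import Mathlib

/-- Extended (Bargmann) space `ℝ^{d+2}` with coordinates `(x¹,…,x^d,t,s)`. -/
abbrev BSpace (d : ℕ) := Fin (d+2) → ℝ

/-- Index of the time coordinate `t = x^{d+1}`. -/
def tIdx (d : ℕ) : Fin (d+2) := ⟨d, by omega⟩

/-- Index of the vertical coordinate `s = x^{d+2}`. -/
def sIdx (d : ℕ) : Fin (d+2) := ⟨d+1, by omega⟩

/-- Flat Bargmann metric `g = Σᵢ (dxⁱ)² + 2dt⊙ds` on `ℝ^{d+2}`. -/
def gB (d : ℕ) (x y : BSpace d) : ℝ :=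
  (∑ i : Fin d, x (Fin.castAdd 2 i) * y (Fin.castAdd 2 i))
    + x (tIdx d) * y (sIdx d) + x (sIdx d) * y (tIdx d)

/-- The null vector `ξ = ∂/∂s`. -/
noncomputable def ξB (d : ℕ) : BSpace d := Pi.single (sIdx d) 1

/-- Ambient space `ℝ^{d+2,2} = ℝ^{d+2} ⊕ ℝ²`. -/
abbrev ASpace (d : ℕ) := BSpace d × ℝ × ℝ

/-- Ambient metric `G` with Gram matrix `[[g,0,0],[0,0,1],[0,1,0]]`. -/
def GA (d : ℕ) (u v : ASpace d) : ℝ :=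
  gB d u.1 v.1 + u.2.1 * v.2.2 + u.2.2 * v.2.1

/-- The special null element `Z₀ = [[0,0,ξ],[−ξ*,0,0],[0,0,0]]` of `o(d+2,2)`:
`Z₀(x,a,b) = (bξ, −θ(x), 0)` with `θ = g(ξ,·)`. -/
noncomputable def Z0 (d : ℕ) (u : ASpace d) : ASpace d :=
  (u.2.2 • ξB d, -gB d (ξB d) u.1, 0)

/-! The field is polynomial of degree two, so its differential at `x` is
`u ↦ Λu − α g(x,u) ξ + α g(ξ,x) u + α g(ξ,u) x + χ u`. In `g(DZ u, v) + g(u, DZ v)` the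
`Λ`-terms cancel by skewness and the two `ξ`-terms cancel against the two `x`-terms, leaving
`2(α g(ξ,x) + χ) g(u,v)`; for `u = ξ`, nullness of `ξ` and `Λξ = −χξ` make `DZ ξ` vanish.
Only symmetry of `g` and nullness of `ξ` enter. -/

section SchroedingerField

variable {E : Type*} [NormedAddCommGroup E] [NormedSpace ℝ E]

noncomputable def schroedingerField (B : E →L[ℝ] E →L[ℝ] ℝ) (Λ : E →L[ℝ] E) (Γ ξ : E)
    (α χ : ℝ) (x : E) : E :=
  Λ x + Γ - (α / 2 * B x x) • ξ + (α * B ξ x) • x + χ • x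

variable (B : E →L[ℝ] E →L[ℝ] ℝ) (Λ : E →L[ℝ] E) (Γ ξ : E) (α χ : ℝ)

theorem hasFDerivAt_schroedingerField (x : E) :
    HasFDerivAt (schroedingerField B Λ Γ ξ α χ)
      (Λ - ((α / 2) • (B x + B.flip x)).smulRight ξ
        + ((α * B ξ x) • ContinuousLinearMap.id ℝ E + (α • B ξ).smulRight x)
        + χ • ContinuousLinearMap.id ℝ E) x := by
  have hquad : HasFDerivAt (fun y => B y y) (B x + B.flip x) x := by
    simpa using B.hasFDerivAt.clm_apply (hasFDerivAt_id x)
  exact ((Λ.hasFDerivAt.add_const Γ).sub ((hquad.const_mul (α / 2)).smul_const ξ)).add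
    (((B ξ).hasFDerivAt.const_mul α).smul (hasFDerivAt_id x)) |>.add
    ((hasFDerivAt_id x).const_smul χ)

variable {B}

theorem fderiv_schroedingerField_apply (hB : ∀ u v, B u v = B v u) (x u : E) :
    fderiv ℝ (schroedingerField B Λ Γ ξ α χ) x u
      = Λ u - (α * B x u) • ξ + ((α * B ξ x) • u + (α * B ξ u) • x) + χ • u := by
  rw [(hasFDerivAt_schroedingerField B Λ Γ ξ α χ x).fderiv]
  simp only [add_apply, sub_apply, smul_apply, ContinuousLinearMap.smulRight_apply,
    ContinuousLinearMap.flip_apply, ContinuousLinearMap.id_apply, smul_eq_mul, hB u x]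
  module

theorem schroedingerField_isConformalKilling (hB : ∀ u v, B u v = B v u)
    (hΛ : ∀ u v, B (Λ u) v + B u (Λ v) = 0) (x u v : E) :
    B (fderiv ℝ (schroedingerField B Λ Γ ξ α χ) x u) v
      + B u (fderiv ℝ (schroedingerField B Λ Γ ξ α χ) x v)
      = 2 * (α * B ξ x + χ) * B u v := by
  simp only [fderiv_schroedingerField_apply Λ Γ ξ α χ hB, map_add, map_sub, map_smul,
    add_apply, sub_apply, smul_apply, smul_eq_mul]
  rw [hB u ξ, hB u x]
  linear_combination hΛ u v

theorem fderiv_schroedingerField_apply_null_eq_zero (hB : ∀ u v, B u v = B v u)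
    (hξ : B ξ ξ = 0) (hΛξ : Λ ξ + χ • ξ = 0) (x : E) :
    fderiv ℝ (schroedingerField B Λ Γ ξ α χ) x ξ = 0 := by
  rw [fderiv_schroedingerField_apply Λ Γ ξ α χ hB, hB x ξ, hξ]
  simpa using hΛξ

end SchroedingerField

noncomputable def gBCLM (d : ℕ) : BSpace d →L[ℝ] BSpace d →L[ℝ] ℝ :=
  let mul := ContinuousLinearMap.mul ℝ ℝ
  let pr := fun i : Fin (d + 2) => ContinuousLinearMap.proj (R := ℝ) (φ := fun _ => ℝ) i
  (∑ i : Fin d, mul.bilinearComp (pr (Fin.castAdd 2 i)) (pr (Fin.castAdd 2 i)))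
    + mul.bilinearComp (pr (tIdx d)) (pr (sIdx d)) + mul.bilinearComp (pr (sIdx d)) (pr (tIdx d))

@[simp] theorem gBCLM_apply (d : ℕ) (x y : BSpace d) : gBCLM d x y = gB d x y := by
  simp [gBCLM, gB]

theorem gB_comm (d : ℕ) (x y : BSpace d) : gB d x y = gB d y x := by
  simp only [gB, mul_comm]
  ring

theorem gB_ξB_ξB (d : ℕ) : gB d (ξB d) (ξB d) = 0 := by
  have hcast : ∀ i : Fin d, Fin.castAdd 2 i ≠ sIdx d := fun i h => by
    simp [sIdx, Fin.ext_iff] at h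
    omega
  have hts : tIdx d ≠ sIdx d := by simp [tIdx, sIdx]
  simp [gB, ξB, hcast, hts]

/-- each vector field of the Schrödinger Lie algebra
`Z(x) = Λx + Γ − (α/2)g(x,x)ξ + α g(ξ,x)x + χx` (with `Λ ∈ so(d+1,1)`,
`Λξ + χξ = 0`) is conformal Killing for the flat Bargmann metric with
conformal factor `φ_Z(x) = 2(α g(ξ,x) + χ)`, and commutes with `ξ = ∂/∂s`. -/
theorem schroedinger_field_conformal_killing (d : ℕ)
    (Λ : BSpace d →ₗ[ℝ] BSpace d)
    (hΛskew : ∀ u v : BSpace d, gB d (Λ u) v + gB d u (Λ v) = 0)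
    (Γ : BSpace d) (α χ : ℝ)
    (hconstraint : Λ (ξB d) + χ • ξB d = 0)
    (Z : BSpace d → BSpace d)
    (hZ : ∀ x : BSpace d, Z x =
      Λ x + Γ - (α / 2 * gB d x x) • ξB d + (α * gB d (ξB d) x) • x + χ • x) :
    (∀ x u v : BSpace d,
      gB d (fderiv ℝ Z x u) v + gB d u (fderiv ℝ Z x v)
        = (2 * (α * gB d (ξB d) x + χ)) * gB d u v)
    ∧ (∀ x : BSpace d, fderiv ℝ Z x (ξB d) = 0) := by
  obtain rfl :
      Z = schroedingerField (gBCLM d) (LinearMap.toContinuousLinearMap Λ) Γ (ξB d) α χ := by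
    funext x
    simp [schroedingerField, hZ]
  have hsymm : ∀ u v, gBCLM d u v = gBCLM d v u := by simp [gB_comm]
  refine ⟨fun x u v => ?_, fun x => ?_⟩
  · simpa using
      schroedingerField_isConformalKilling _ Γ (ξB d) α χ hsymm (by simpa using hΛskew) x u v
  · exact fderiv_schroedingerField_apply_null_eq_zero _ Γ (ξB d) α χ hsymm
      (by simpa using gB_ξB_ξB d) hconstraint x
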